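/- Let A be a finite nonempty set, w : A → ℝ weights with w(a) ≥ 0 for all a and Σ_a w(a) = 1, f : A → ℝ, and 0 < τ₁ ≤ τ₂ < 1. If m₁ is the τ₁-expectile of f under w and m₂ is the τ₂-expectile of f under w, then m₁ ≤ m₂. -/
import Mathlib


open Finset

/-- `m` is the `τ`-expectile of the values `f` under the weights `w`. -/
def IsExpectile {A : Type*} [Fintype A] (τ : ℝ) (w f : A → ℝ) (m : ℝ) : Prop :=
  τ * ∑ a, w a * max (f a - m) 0 = (1 - τ) * ∑ a, w a * max (m - f a) 0

/-- The `τ`-expectile is monotone in `τ`: for `0 < τ₁ ≤ τ₂ < 1`, the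
`τ₁`-expectile of `f` under `w` is at most the `τ₂`-expectile of `f` under `w`. -/
theorem finite_expectile_mono_in_tau
    {A : Type*} [Fintype A] [Nonempty A]
    (w : A → ℝ) (hw : ∀ a, 0 ≤ w a) (hsum : ∑ a, w a = 1)
    (f : A → ℝ) (τ₁ τ₂ : ℝ) (h0 : 0 < τ₁) (h12 : τ₁ ≤ τ₂) (h1 : τ₂ < 1)
    (m₁ m₂ : ℝ) (hm₁ : IsExpectile τ₁ w f m₁) (hm₂ : IsExpectile τ₂ w f m₂) :
    m₁ ≤ m₂ := by
  by_contra hlt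
  push_neg at hlt
  set P : ℝ → ℝ := fun m => ∑ a, w a * max (f a - m) 0 with hPdef
  set N : ℝ → ℝ := fun m => ∑ a, w a * max (m - f a) 0 with hNdef
  have e1 : τ₁ * P m₁ = (1 - τ₁) * N m₁ := hm₁
  have e2 : τ₂ * P m₂ = (1 - τ₂) * N m₂ := hm₂
  have hPN : ∀ m, P m - N m = (∑ a, w a * f a) - m := by
    intro m
    have h1 : P m - N m = ∑ a, w a * (f a - m) := by
      rw [hPdef, hNdef, ← Finset.sum_sub_distrib]
      refine Finset.sum_congr rfl fun a _ => ?_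
      rw [← mul_sub]
      congr 1
      have := max_zero_sub_eq_self (f a - m)
      simpa [neg_sub] using this
    rw [h1]
    simp [mul_sub, Finset.sum_sub_distrib, ← Finset.sum_mul, hsum]
  have hPnn : ∀ m, 0 ≤ P m := fun m =>
    Finset.sum_nonneg fun a _ => mul_nonneg (hw a) (le_max_right _ _)
  have hNnn : ∀ m, 0 ≤ N m := fun m =>
    Finset.sum_nonneg fun a _ => mul_nonneg (hw a) (le_max_right _ _)
  have ha : P m₁ ≤ P m₂ :=
    Finset.sum_le_sum fun a _ => mul_le_mul_of_nonneg_left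
      (max_le_max (by linarith) le_rfl) (hw a)
  have hb : N m₂ ≤ N m₁ :=
    Finset.sum_le_sum fun a _ => mul_le_mul_of_nonneg_left
      (max_le_max (by linarith) le_rfl) (hw a)
  have hab : (P m₂ - P m₁) + (N m₁ - N m₂) = m₁ - m₂ := by
    have := hPN m₁
    have := hPN m₂
    linarith
  have ha' : (0:ℝ) ≤ P m₂ - P m₁ := by linarith
  have hb' : (0:ℝ) ≤ N m₁ - N m₂ := by linarith
  have hτ1 : (0:ℝ) < 1 - τ₁ := by linarith
  have hpos : 0 < τ₁ * (P m₂ - P m₁) + (1 - τ₁) * (N m₁ - N m₂) := by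
    rcases ha'.lt_or_eq with h | h
    · have h1' := mul_pos h0 h
      have h2' := mul_nonneg hτ1.le hb'
      linarith
    · have hbpos : 0 < N m₁ - N m₂ := by linarith
      have h1' := mul_pos hτ1 hbpos
      have h2' : τ₁ * (P m₂ - P m₁) = 0 := by rw [← h, mul_zero]
      linarith
  have hle : τ₁ * P m₂ - (1 - τ₁) * N m₂ ≤ 0 := by
    nlinarith [hPnn m₂, hNnn m₂]
  nlinarith
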